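/- arXiv:1301.4630 — 6 statements merged into one kernel-verified Lean document; each statement's English description precedes it below -/
import Mathlib

section
/- For a finite lower set D in ℕ₀ⁿ, the complement ℕ₀ⁿ \ D equals the union over β ∈ E(D) of the translated cones β + ℕ₀ⁿ, where E(D) is the limiting set of D. -/
def IsLowerSetN {n : ℕ} (D : Set (Fin n → ℕ)) : Prop :=
  ∀ d ∈ D, ∀ i : Fin n, d i ≠ 0 → Function.update d i (d i - 1) ∈ D

/-- The limiting set `E(D)`: all `β ∉ D` such that `β i ≠ 0` implies `β - eᵢ ∈ D`. -/
def limitSet {n : ℕ} (D : Set (Fin n → ℕ)) : Set (Fin n → ℕ) :=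
  {β | β ∉ D ∧ ∀ i : Fin n, β i ≠ 0 → Function.update β i (β i - 1) ∈ D}

lemma lowerSet_downward {n : ℕ} {D : Set (Fin n → ℕ)} (hD : IsLowerSetN D) :
    ∀ N : ℕ, ∀ x y : Fin n → ℕ, (∑ i, (x i - y i)) ≤ N → x ∈ D →
      (∀ i, y i ≤ x i) → y ∈ D := by
  intro N
  induction N with
  | zero =>
    intro x y hs hx hle
    have hxy : x = y := by
      funext i
      have h1 : x i - y i = 0 := by
        have := Finset.sum_eq_zero_iff.mp (Nat.le_zero.mp hs) i (Finset.mem_univ i)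
        exact this
      have := hle i
      omega
    exact hxy ▸ hx
  | succ N ih =>
    intro x y hs hx hle
    by_cases hxy : x = y
    · exact hxy ▸ hx
    · have : ∃ i, y i < x i := by
        by_contra h
        push_neg at h
        exact hxy (funext fun i => le_antisymm (h i) (hle i))
      obtain ⟨i, hi⟩ := this
      set x' := Function.update x i (x i - 1) with hx'
      have hx'D : x' ∈ D := hD x hx i (by omega)
      have hle' : ∀ j, y j ≤ x' j := by
        intro j
        by_cases hj : j = i
        · subst hj; simp [hx', Function.update_self]; omega
        · simp [hx', Function.update_of_ne hj]; exact hle j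
      have hsum : (∑ j, (x' j - y j)) < ∑ j, (x j - y j) := by
        apply Finset.sum_lt_sum
        · intro j _
          by_cases hj : j = i
          · subst hj; simp [hx', Function.update_self]; omega
          · simp [hx', Function.update_of_ne hj]
        · exact ⟨i, Finset.mem_univ i, by simp [hx', Function.update_self]; omega⟩
      exact ih x' y (by omega) hx'D hle'

lemma exists_limit {n : ℕ} {D : Set (Fin n → ℕ)} (hD : IsLowerSetN D) :
    ∀ N : ℕ, ∀ x : Fin n → ℕ, (∑ i, x i) ≤ N → x ∉ D →
      ∃ β ∈ limitSet D, ∀ i, β i ≤ x i := by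
  intro N
  induction N with
  | zero =>
    intro x hs hx
    refine ⟨x, ⟨hx, fun i hi => ?_⟩, fun i => le_refl _⟩
    exact absurd (Finset.sum_eq_zero_iff.mp (Nat.le_zero.mp hs) i (Finset.mem_univ i)) hi
  | succ N ih =>
    intro x hs hx
    by_cases h : ∀ i : Fin n, x i ≠ 0 → Function.update x i (x i - 1) ∈ D
    · exact ⟨x, ⟨hx, h⟩, fun i => le_refl _⟩
    · push_neg at h
      obtain ⟨i, hi0, hi⟩ := h
      set x' := Function.update x i (x i - 1) with hx'
      have hsum : (∑ j, x' j) < ∑ j, x j := by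
        apply Finset.sum_lt_sum
        · intro j _
          by_cases hj : j = i
          · subst hj; simp [hx', Function.update_self]
          · simp [hx', Function.update_of_ne hj]
        · exact ⟨i, Finset.mem_univ i, by simp [hx', Function.update_self]; omega⟩
      obtain ⟨β, hβ, hble⟩ := ih x' (by omega) hi
      refine ⟨β, hβ, fun j => ?_⟩
      have := hble j
      by_cases hj : j = i
      · subst hj
        simp only [hx', Function.update_self] at this
        omega
      · simp only [hx', Function.update_of_ne hj] at this; exact this

/-- For a finite lower set `D`, the complement of `D` equals the union over
`β ∈ E(D)` of the translated cones `β + ℕ₀ⁿ`. -/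
theorem compl_lowerSet_eq_union_cones {n : ℕ} (D : Set (Fin n → ℕ))
    (hfin : D.Finite) (hD : IsLowerSetN D) :
    Dᶜ = ⋃ β ∈ limitSet D, {x : Fin n → ℕ | ∃ γ : Fin n → ℕ, x = β + γ} := by
  ext x
  simp only [Set.mem_compl_iff, Set.mem_iUnion, Set.mem_setOf_eq]
  constructor
  · intro hx
    obtain ⟨β, hβ, hle⟩ := exists_limit hD (∑ i, x i) x le_rfl hx
    refine ⟨β, hβ, fun i => x i - β i, funext fun i => ?_⟩
    simp only [Pi.add_apply]
    have := hle i
    omega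
  · rintro ⟨β, hβ, γ, rfl⟩ hmem
    exact hβ.1 (lowerSet_downward hD (∑ i, ((β + γ) i - β i)) (β + γ) β le_rfl hmem
      (fun i => by simp))
end

section
/- Let D₀ ⊇ D₁ ⊇ … ⊇ D_k be lower sets in ℕ₀^{n-1} and D = ⋃_{i=0}^{k} embed_i(D_i). Then the limiting set E(D) is contained in ⋃_{i=0}^{k} embed_i(E(D_i)) ∪ {(0,…,0,k+1)}. -/
/-- `embed_c` maps `(d₁,…,d_{n-1})` to `(d₁,…,d_{n-1},c)`. -/
def embedC {n : ℕ} (c : ℕ) (d : Fin n → ℕ) : Fin (n + 1) → ℕ := Fin.snoc d c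

/-- If `D₀ ⊇ D₁ ⊇ … ⊇ D_k` are lower sets in `ℕ₀^{n-1}` and
`D = ⋃_{i=0}^{k} embed_i(D_i)`, then
`E(D) ⊆ ⋃_{i=0}^{k} embed_i(E(D_i)) ∪ {(0,…,0,k+1)}`. -/
theorem limitSet_union_embed_subset {n k : ℕ} (D : ℕ → Set (Fin n → ℕ))
    (hlow : ∀ i ≤ k, IsLowerSetN (D i))
    (hanti : ∀ i j, i ≤ j → j ≤ k → D j ⊆ D i) :
    limitSet (⋃ i ∈ Set.Iic k, embedC i '' D i) ⊆
      (⋃ i ∈ Set.Iic k, embedC i '' limitSet (D i)) ∪ {embedC (k + 1) 0} := by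
  intro β hβ
  obtain ⟨hnotin, hupd⟩ := hβ
  set b : Fin n → ℕ := Fin.init β with hb
  set c : ℕ := β (Fin.last n) with hc
  have hβeq : β = embedC c b := by
    simp only [embedC, hb, hc, Fin.snoc_init_self]
  by_cases hck : c ≤ k
  · -- β = embed_c b with b ∈ E(D_c)
    left
    refine Set.mem_biUnion hck ⟨b, ⟨?_, ?_⟩, hβeq.symm⟩
    · intro hbD
      exact hnotin (Set.mem_biUnion hck ⟨b, hbD, hβeq.symm⟩)
    · intro j hj
      have hβj : β (Fin.castSucc j) ≠ 0 := hj
      have hmem := hupd (Fin.castSucc j) hβj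
      obtain ⟨i, hik, ⟨d, hd, heq⟩⟩ := Set.mem_iUnion₂.mp hmem
      have hlast : i = c := by
        have := congrFun heq (Fin.last n)
        simpa [embedC, Function.update_apply, (Fin.castSucc_lt_last j).ne', hc] using this
      have hde : d = Function.update b j (b j - 1) := by
        have h2 : embedC c (Function.update b j (b j - 1)) =
            Function.update β (Fin.castSucc j) (β (Fin.castSucc j) - 1) := by
          rw [hβeq]
          simp only [embedC, Fin.snoc_update, Fin.snoc_castSucc]
        have := heq.trans h2.symm
        rw [hlast] at this
        have := congrArg Fin.init this
        simpa [embedC, Fin.init_snoc] using this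
      rw [hlast] at hd
      rwa [hde] at hd
  · -- c ≥ k + 1
    right
    push_neg at hck
    have hc0 : β (Fin.last n) ≠ 0 := by omega
    have hmem := hupd (Fin.last n) hc0
    obtain ⟨i, hik, ⟨d, hd, heq⟩⟩ := Set.mem_iUnion₂.mp hmem
    have hlast : i = c - 1 := by
      have := congrFun heq (Fin.last n)
      simpa [embedC, hc] using this
    have hck1 : c = k + 1 := by
      have : i ≤ k := hik
      omega
    have hb0 : b = 0 := by
      funext j
      by_contra hj
      have hβj : β (Fin.castSucc j) ≠ 0 := hj
      have hmem' := hupd (Fin.castSucc j) hβj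
      obtain ⟨i', hik', ⟨d', hd', heq'⟩⟩ := Set.mem_iUnion₂.mp hmem'
      have : i' = c := by
        have := congrFun heq' (Fin.last n)
        simpa [embedC, Function.update_apply, (Fin.castSucc_lt_last j).ne', hc] using this
      have : i' ≤ k := hik'
      omega
    rw [hβeq, hb0, hck1]
    rfl
end

section
/- Let k be a field, H a finite set of points in kⁿ with multiplicity structures given by lower sets, defining m functionals L₁,…,L_m (partial derivatives at the points indexed by elements of the lower sets). Then the vanishing ideal I(H) = { f ∈ k[X₁,…,X_n] : Lᵢ(f)=0 for all i } satisfies dim_k (k[X]/I(H)) = m. -/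
/-- The mixed partial derivative `∂^{d₁+…+d_n} / ∂x₁^{d₁}…∂x_n^{d_n}`. -/
noncomputable def mderiv {n : ℕ} {k : Type*} [CommSemiring k]
    (d : Fin n → ℕ) (f : MvPolynomial (Fin n) k) : MvPolynomial (Fin n) k :=
  (List.finRange n).foldr (fun i g => (fun h => MvPolynomial.pderiv i h)^[d i] g) f

/-!
Let `L_{i,d} f = (∂^d f)(pᵢ)` and `Φ = (L_{i,d})_{i,d} : k[X] → k^m`. Then `I = ker Φ`, so it
suffices to show that `Φ` is surjective.

Let `𝔪ᵢ` be the maximal ideal of `pᵢ`. A derivation lowers the `𝔪ᵢ`-adic order by at most one,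
so `L_{i,d}` vanishes on `𝔪ᵢ^N` once `N > |d|`. The ideals `𝔪ᵢ^N` are pairwise coprime, so by the
Chinese remainder theorem the residues of `f` modulo them, which determine `Φ f`, can be
prescribed independently. At a single point the functionals are dual to the recentred monomials:
`L_{i,d} ∏ⱼ (Xⱼ - pᵢⱼ)^{eⱼ} = e! δ_{de}`, and `e! ≠ 0` in characteristic zero.
-/

open MvPolynomial

namespace Derivation

variable {R A : Type*} [CommSemiring R] [CommSemiring A] [Algebra R A]
  (D : Derivation R A A) (J : Ideal A)

theorem map_mem_pow_pred {N : ℕ} {a : A} (ha : a ∈ J ^ N) : D a ∈ J ^ (N - 1) := by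
  induction N generalizing a with
  | zero => simp
  | succ N ih =>
    rw [pow_succ] at ha
    refine Submodule.mul_induction_on ha (fun x hx y hy => ?_) (fun x y hx hy => ?_)
    · rw [leibniz, smul_eq_mul, smul_eq_mul]
      refine Ideal.add_mem _ (Ideal.mul_mem_right _ _ hx) (mul_comm (D x) y ▸ ?_)
      cases N with
      | zero => simp
      | succ N => exact pow_succ J N ▸ Ideal.mul_mem_mul (ih hx) hy
    · rw [map_add]
      exact Ideal.add_mem _ hx hy

theorem iterate_map_mem_pow_sub (m : ℕ) {N : ℕ} {a : A} (ha : a ∈ J ^ N) :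
    (⇑D)^[m] a ∈ J ^ (N - m) := by
  induction m with
  | zero => simpa using ha
  | succ m ih =>
    rw [Function.iterate_succ_apply', ← Nat.sub_sub]
    exact D.map_mem_pow_pred J ih

end Derivation

section mderivAlong

variable {σ k : Type*} [CommSemiring k]

noncomputable def mderivAlong (L : List σ) (d : σ → ℕ) : Module.End k (MvPolynomial σ k) :=
  (L.map fun i => (pderiv i).toLinearMap ^ d i).prod

theorem mderivAlong_cons (i : σ) (L : List σ) (d : σ → ℕ) :
    mderivAlong (k := k) (i :: L) d = (pderiv i).toLinearMap ^ d i * mderivAlong L d :=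
  rfl

theorem mderiv_eq_mderivAlong {n : ℕ} (d : Fin n → ℕ) (f : MvPolynomial (Fin n) k) :
    mderiv d f = mderivAlong (List.finRange n) d f := by
  unfold mderiv
  induction List.finRange n with
  | nil => simp [mderivAlong]
  | cons i L ih =>
    rw [List.foldr_cons, mderivAlong_cons, Module.End.mul_apply, ← ih, Module.End.coe_pow,
      Derivation.coeFn_coe]

theorem mderivAlong_mem_pow (L : List σ) (d : σ → ℕ) {J : Ideal (MvPolynomial σ k)} {N : ℕ}
    {f : MvPolynomial σ k} (hf : f ∈ J ^ N) : mderivAlong L d f ∈ J ^ (N - (L.map d).sum) := by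
  induction L with
  | nil => simpa [mderivAlong] using hf
  | cons i L ih =>
    rw [mderivAlong_cons, Module.End.mul_apply, Module.End.coe_pow, Derivation.coeFn_coe,
      List.map_cons, List.sum_cons, add_comm, ← Nat.sub_sub]
    exact (pderiv i).iterate_map_mem_pow_sub J _ ih

end mderivAlong

theorem eval_mderiv_eq_zero_of_mem_pow {n : ℕ} {k : Type*} [CommSemiring k] {p : Fin n → k}
    {d : Fin n → ℕ} {N : ℕ} (hN : ∑ j, d j < N) {f : MvPolynomial (Fin n) k}
    (hf : f ∈ RingHom.ker (eval p) ^ N) : eval p (mderiv d f) = 0 := by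
  rw [mderiv_eq_mderivAlong, ← RingHom.mem_ker]
  refine Ideal.pow_le_self ?_ (mderivAlong_mem_pow _ d hf)
  rw [← Fin.sum_univ_def]
  omega

section shiftedMonomial

variable {σ k : Type*} [Fintype σ] [CommRing k] (p : σ → k)

noncomputable def shiftedMonomial (e : σ → ℕ) : MvPolynomial σ k :=
  ∏ j, (X j - C (p j)) ^ e j

theorem eval_shiftedMonomial (e : σ → ℕ) :
    eval p (shiftedMonomial p e) = if e = 0 then 1 else 0 := by
  split_ifs with he
  · simp [shiftedMonomial, he]
  · obtain ⟨j, hj⟩ := Function.ne_iff.mp he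
    simp only [shiftedMonomial, map_prod, map_pow, map_sub, eval_X, eval_C, sub_self]
    exact Finset.prod_eq_zero (Finset.mem_univ j) (zero_pow hj)

variable [DecidableEq σ]

theorem pderiv_shiftedMonomial (e : σ → ℕ) (i : σ) :
    pderiv i (shiftedMonomial p e) = e i • shiftedMonomial p (e - Pi.single i 1) := by
  unfold shiftedMonomial
  rw [Fintype.prod_eq_mul_prod_compl i, Fintype.prod_eq_mul_prod_compl i]
  have hrest : ∏ j ∈ {i}ᶜ, (X j - C (p j)) ^ (e - Pi.single i 1 : σ → ℕ) j
      = ∏ j ∈ {i}ᶜ, (X j - C (p j) : MvPolynomial σ k) ^ e j :=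
    Finset.prod_congr rfl fun j hj => by
      rw [Pi.sub_apply, Pi.single_eq_of_ne (by simpa using hj), Nat.sub_zero]
  have hconst : pderiv i (∏ j ∈ {i}ᶜ, (X j - C (p j) : MvPolynomial σ k) ^ e j) = 0 :=
    Finset.prod_induction _ (fun f => pderiv i f = 0)
      (fun a b ha hb => by rw [pderiv_mul, ha, hb, mul_zero, zero_mul, add_zero]) pderiv_one
      fun j hj => by
        rw [pderiv_pow, map_sub, pderiv_X_of_ne (by simpa using hj), pderiv_C, sub_zero, mul_zero]
  rw [pderiv_mul, hconst, hrest, pderiv_pow, map_sub, pderiv_X_self, pderiv_C]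
  simp only [Pi.sub_apply, Pi.single_eq_same, nsmul_eq_mul]
  ring

theorem pderiv_pow_apply_shiftedMonomial (e : σ → ℕ) (i : σ) (m : ℕ) :
    ((pderiv i).toLinearMap ^ m) (shiftedMonomial p e)
      = (e i).descFactorial m • shiftedMonomial p (e - Pi.single i m) := by
  induction m with
  | zero => simp
  | succ m ih =>
    have hexp : e - Pi.single i m - Pi.single i 1 = e - Pi.single i (m + 1) := by
      ext j
      rcases eq_or_ne j i with rfl | hj
      · simp only [Pi.sub_apply, Pi.single_eq_same]
        omega
      · simp [hj]
    rw [pow_succ', Module.End.mul_apply, ih, map_nsmul, Derivation.coeFn_coe,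
      pderiv_shiftedMonomial, smul_smul, hexp, Nat.descFactorial_succ, mul_comm]
    simp

theorem mderivAlong_shiftedMonomial {L : List σ} (hL : L.Nodup) (d e : σ → ℕ) :
    mderivAlong L d (shiftedMonomial p e)
      = (L.map fun j => (e j).descFactorial (d j)).prod
          • shiftedMonomial p (e - fun j => if j ∈ L then d j else 0) := by
  induction L with
  | nil => simp [mderivAlong, ← Pi.zero_def]
  | cons i L ih =>
    obtain ⟨hi, hL⟩ := List.nodup_cons.mp hL
    have hexp : e - (fun j => if j ∈ L then d j else 0) - Pi.single i (d i)
        = e - fun j => if j ∈ i :: L then d j else 0 := by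
      ext j
      rcases eq_or_ne j i with rfl | hj <;> simp [*]
    rw [mderivAlong_cons, Module.End.mul_apply, ih hL, map_nsmul,
      pderiv_pow_apply_shiftedMonomial, smul_smul, hexp, List.map_cons, List.prod_cons, mul_comm]
    simp [hi]

end shiftedMonomial

theorem eval_mderiv_shiftedMonomial {n : ℕ} {k : Type*} [CommRing k] (p : Fin n → k)
    (d e : Fin n → ℕ) :
    eval p (mderiv d (shiftedMonomial p e))
      = if d = e then ((∏ j, (e j).factorial : ℕ) : k) else 0 := by
  rw [mderiv_eq_mderivAlong, mderivAlong_shiftedMonomial p (List.nodup_finRange n)]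
  simp only [List.mem_finRange, if_true]
  rw [← Fin.prod_univ_def, map_nsmul, eval_shiftedMonomial]
  by_cases hde : d = e
  · subst hde
    simp [Nat.descFactorial_self]
  rw [if_neg hde]
  by_cases hlt : ∃ j, e j < d j
  · obtain ⟨j, hj⟩ := hlt
    rw [Finset.prod_eq_zero (Finset.mem_univ j) (Nat.descFactorial_eq_zero_iff_lt.mpr hj),
      zero_smul]
  · simp only [not_exists, not_lt] at hlt
    have hsub : e - d ≠ 0 := fun h => hde (le_antisymm hlt (tsub_eq_zero_iff_le.mp h))
    rw [if_neg hsub, smul_zero]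

theorem isCoprime_ker_eval {σ k : Type*} [Field k] {p q : σ → k} (hpq : p ≠ q) :
    IsCoprime (RingHom.ker (eval p)) (RingHom.ker (eval q)) := by
  have hmax (x : σ → k) : (RingHom.ker (eval x)).IsMaximal :=
    RingHom.ker_isMaximal_of_surjective _ fun a => ⟨C a, eval_C a⟩
  refine Ideal.isCoprime_iff_sup_eq.mpr ((hmax p).coprime_of_ne (hmax q) fun hker => ?_)
  obtain ⟨j, hj⟩ := Function.ne_iff.mp hpq
  have hmem : X j - C (p j) ∈ RingHom.ker (eval q) := hker ▸ by simp [RingHom.mem_ker]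
  exact hj (sub_eq_zero.mp (by simpa [RingHom.mem_ker] using hmem)).symm

section mderivEval

variable {ι : Type*} {n : ℕ} {k : Type*} [Field k]
  (p : ι → Fin n → k) (D : ι → Set (Fin n → ℕ))

noncomputable def mderivEval : MvPolynomial (Fin n) k →ₗ[k] (Σ i, D i) → k :=
  LinearMap.pi fun x => (aeval (p x.1)).toLinearMap ∘ₗ mderivAlong (List.finRange n) x.2

theorem mderivEval_apply (f : MvPolynomial (Fin n) k) (x : Σ i, D i) :
    mderivEval p D f x = eval (p x.1) (mderiv x.2 f) := by
  simp [mderivEval, mderiv_eq_mderivAlong]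

theorem mderivEval_surjective [Fintype ι] [CharZero k] [∀ i, Fintype (D i)]
    (hp : Function.Injective p) : Function.Surjective (mderivEval p D) := by
  intro v
  set N := ∑ x : Σ i, D i, ∑ j, (x.2 : Fin n → ℕ) j + 1
  have hN (x : Σ i, D i) : ∑ j, (x.2 : Fin n → ℕ) j < N :=
    Nat.lt_succ_of_le (Finset.single_le_sum (f := fun x : Σ i, D i => ∑ j, (x.2 : Fin n → ℕ) j)
      (fun _ _ => Nat.zero_le _) (Finset.mem_univ x))
  set P : ι → MvPolynomial (Fin n) k := fun i =>
    ∑ e : D i, (v ⟨i, e⟩ / (∏ j, (e.1 j).factorial : ℕ)) • shiftedMonomial (p i) e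
  obtain ⟨f, hf⟩ := Ideal.exists_forall_sub_mem_ideal
    (I := fun i => RingHom.ker (eval (p i)) ^ N)
    (fun i l hil => (isCoprime_ker_eval (hp.ne hil)).pow) P
  refine ⟨f, funext fun ⟨i, d⟩ => ?_⟩
  -- The CRT congruence `f ≡ P i` modulo `𝔪ᵢ^N` is invisible to `L_{i,d}`.
  have hlocal : mderivEval p D f ⟨i, d⟩ = mderivEval p D (P i) ⟨i, d⟩ := by
    rw [← sub_eq_zero, ← Pi.sub_apply, ← map_sub, mderivEval_apply]
    exact eval_mderiv_eq_zero_of_mem_pow (hN ⟨i, d⟩) (hf i)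
  have hfact (e : D i) : ((∏ j, (e.1 j).factorial : ℕ) : k) ≠ 0 :=
    Nat.cast_ne_zero.mpr (Finset.prod_ne_zero_iff.mpr fun j _ => Nat.factorial_ne_zero _)
  rw [hlocal, map_sum, Finset.sum_apply, Fintype.sum_eq_single d]
  · rw [map_smul, Pi.smul_apply, mderivEval_apply, eval_mderiv_shiftedMonomial, if_pos rfl,
      smul_eq_mul, div_mul_cancel₀ _ (hfact d)]
  · intro e hed
    rw [map_smul, Pi.smul_apply, mderivEval_apply, eval_mderiv_shiftedMonomial,
      if_neg (Subtype.coe_injective.ne hed.symm), smul_zero]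

end mderivEval

theorem vanishing_ideal_quotient_dim_general {n : ℕ} {k : Type*} [Field k] [CharZero k]
    {t : ℕ} (p : Fin t → (Fin n → k)) (hp : Function.Injective p)
    (D : Fin t → Set (Fin n → ℕ))
    (hfin : ∀ i, (D i).Finite)
    (I : Ideal (MvPolynomial (Fin n) k))
    (hI : (I : Set (MvPolynomial (Fin n) k)) =
      {f | ∀ i : Fin t, ∀ d ∈ D i, MvPolynomial.eval (p i) (mderiv d f) = 0}) :
    Module.finrank k (MvPolynomial (Fin n) k ⧸ I) = ∑ i : Fin t, (D i).ncard := by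
  have := fun i => (hfin i).fintype
  have hker : LinearMap.ker (mderivEval p D) = I.restrictScalars k := by
    ext f
    rw [Submodule.restrictScalars_mem, LinearMap.mem_ker, funext_iff, ← SetLike.mem_coe, hI]
    simp [mderivEval_apply, Sigma.forall]
  rw [← (Submodule.Quotient.restrictScalarsEquiv k I).finrank_eq, ← hker,
    ((mderivEval p D).quotKerEquivOfSurjective (mderivEval_surjective p D hp)).finrank_eq,
    Module.finrank_fintype_fun_eq_card, Fintype.card_sigma]
  simp only [Set.ncard_eq_toFinset_card', Set.toFinset_card]

/-- The vanishing ideal of a finite set of distinct points with multiplicity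
structures given by finite lower sets `Dᵢ` has codimension `m = Σᵢ #Dᵢ`:
`dim_k k[X]/I(H) = m`. -/
theorem vanishing_ideal_quotient_dim {n : ℕ} {k : Type*} [Field k] [CharZero k]
    {t : ℕ} (p : Fin t → (Fin n → k)) (hp : Function.Injective p)
    (D : Fin t → Set (Fin n → ℕ))
    (hfin : ∀ i, (D i).Finite) (hlow : ∀ i, IsLowerSetN (D i))
    (hne : ∀ i, (D i).Nonempty)
    (I : Ideal (MvPolynomial (Fin n) k))
    (hI : (I : Set (MvPolynomial (Fin n) k)) =
      {f | ∀ i : Fin t, ∀ d ∈ D i, MvPolynomial.eval (p i) (mderiv d f) = 0}) :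
    Module.finrank k (MvPolynomial (Fin n) k ⧸ I) = ∑ i : Fin t, (D i).ncard :=
  vanishing_ideal_quotient_dim_general p hp D hfin I hI
end

section
/- Let G be the reduced Gröbner basis, under lexicographic order with X₁ ≻ … ≻ X_n, of a zero-dimensional radical-or-not ideal I ⊆ k[X₁,…,X_n] that is the vanishing ideal of a finite set of points with multiplicity structures. Let p₀ ∈ G be the unique univariate polynomial in X_n. For each g ∈ G, viewing g as a polynomial in X₁,…,X_{n-1} with coefficients in k[X_n], the leading coefficient LC_n(g) ∈ k[X_n] divides p₀. -/
/-- leading exponent under lexicographic order with `X 0 ≻ X 1 ≻ …`. -/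
noncomputable def lexDeg {n : ℕ} {k : Type*} [CommSemiring k]
    (f : MvPolynomial (Fin n) k) : Fin n → ℕ :=
  ⇑(ofLex ((f.support.image (fun m => toLex m)).max.unbotD (toLex 0)))

def IsRedGB {n : ℕ} {k : Type*} [Field k] (I : Ideal (MvPolynomial (Fin n) k))
    (G : Set (MvPolynomial (Fin n) k)) : Prop :=
  G ⊆ (I : Set (MvPolynomial (Fin n) k)) ∧
  (∀ g ∈ G, g ≠ 0) ∧
  (∀ g ∈ G, MvPolynomial.coeff (Finsupp.equivFunOnFinite.symm (lexDeg g)) g = 1) ∧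
  (∀ f ∈ I, f ≠ 0 → ∃ g ∈ G, lexDeg g ≤ lexDeg f) ∧
  (∀ g ∈ G, ∀ m ∈ g.support, ∀ g' ∈ G, g' ≠ g → ¬ (lexDeg g' ≤ ⇑m))

/-- the lex-leading value of the first `n` coordinates over the support of `f`,
i.e. the exponent of the leading monomial of `f` regarded in `k(X_n)[X₁,…,X_{n-1}]`. -/
noncomputable def initLead {n : ℕ} {k : Type*} [CommSemiring k]
    (f : MvPolynomial (Fin (n + 1)) k) : Fin n → ℕ :=
  ⇑(ofLex ((f.support.image
      (fun (m : Fin (n + 1) →₀ ℕ) => toLex (Finsupp.equivFunOnFinite.symm (Fin.init ⇑m)))).max.unbotD (toLex 0)))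

/-- `LC_n(f)`: the leading coefficient (an element of `k[X_n]`) of `f` regarded as
an element of `k(X_n)[X₁,…,X_{n-1}]` under lex order. -/
noncomputable def LCn {n : ℕ} {k : Type*} [CommSemiring k]
    (f : MvPolynomial (Fin (n + 1)) k) : Polynomial k :=
  ∑ m ∈ f.support.filter (fun (m : Fin (n + 1) →₀ ℕ) => Fin.init ⇑m = initLead f),
    Polynomial.C (MvPolynomial.coeff m f) * Polynomial.X ^ (m (Fin.last n))


/-!
Regard polynomials as polynomials in `X₁, …, X_{n-1}` over `k[X_n]`, let `X^α` be the leading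
monomial of `g` in `X₁, …, X_{n-1}`, `h = LC_n(g)`, `P = p₀ ∈ k[X_n]`, and write
`d = gcd(h, P) = a h + b P`. Then `f = a g + b X^α p₀ ∈ I` has no terms above `X^α`, and its
coefficient at `X^α` is `d`, so its leading exponent is `(α, deg d)`, which divides the leading
exponent `(α, deg h)` of `g`. As `G` is reduced, the element of `G` whose leading exponent
divides that of `f` must be `g` itself, whence `deg h ≤ deg d`; since `d ∣ h`, `h` and `d` are
associated and `h ∣ P`.
-/

section Exponents

variable {n : ℕ}

noncomputable def snocExp (β : Fin n → ℕ) (j : ℕ) : Fin (n + 1) →₀ ℕ :=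
  Finsupp.equivFunOnFinite.symm (Fin.snoc β j)

@[simp] lemma coe_snocExp (β : Fin n → ℕ) (j : ℕ) : ⇑(snocExp β j) = Fin.snoc β j := rfl

@[simp] lemma snocExp_init_last (m : Fin (n + 1) →₀ ℕ) :
    snocExp (Fin.init ⇑m) (m (Fin.last n)) = m :=
  DFunLike.coe_injective (Fin.snoc_init_self _)

lemma snocExp_eq_iff {β : Fin n → ℕ} {j : ℕ} {m : Fin (n + 1) →₀ ℕ} :
    snocExp β j = m ↔ Fin.init ⇑m = β ∧ m (Fin.last n) = j := by
  rw [← snocExp_init_last m, snocExp, snocExp, Equiv.apply_eq_iff_eq, Fin.snoc_inj]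
  simp [eq_comm]

lemma snoc_le_snoc_iff {α β : Fin n → ℕ} {i j : ℕ} :
    (Fin.snoc α i : Fin (n + 1) → ℕ) ≤ Fin.snoc β j ↔ α ≤ β ∧ i ≤ j := by
  simp [Fin.forall_fin_succ', Pi.le_def]

lemma snocExp_le_snocExp_iff {α β : Fin n → ℕ} {i j : ℕ} :
    snocExp α i ≤ snocExp β j ↔ α ≤ β ∧ i ≤ j := by
  rw [← Finsupp.coe_le_coe, coe_snocExp, coe_snocExp, snoc_le_snoc_iff]

lemma snocExp_tsub_snocExp (α β : Fin n → ℕ) (i j : ℕ) :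
    snocExp β j - snocExp α i = snocExp (β - α) (j - i) := by
  ext l
  induction l using Fin.lastCases <;> simp

lemma snocExp_eq_zero_iff {β : Fin n → ℕ} {j : ℕ} : snocExp β j = 0 ↔ β = 0 ∧ j = 0 := by
  rw [snocExp_eq_iff]
  constructor <;> rintro ⟨rfl, rfl⟩ <;> exact ⟨rfl, rfl⟩

lemma single_last_eq_snocExp (j : ℕ) : Finsupp.single (Fin.last n) j = snocExp 0 j := by
  ext l
  induction l using Fin.lastCases <;> simp [(Fin.castSucc_lt_last _).ne]

noncomputable def toLexFinsupp (β : Fin n → ℕ) : Lex (Fin n →₀ ℕ) :=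
  toLex (Finsupp.equivFunOnFinite.symm β)

lemma toLexFinsupp_injective : Function.Injective (toLexFinsupp (n := n)) :=
  Finsupp.equivFunOnFinite.symm.injective.comp toLex.injective

lemma toLex_snocExp_lt_of_lt {α β : Fin n → ℕ} (h : toLexFinsupp β < toLexFinsupp α) (i j : ℕ) :
    toLex (snocExp β i) < toLex (snocExp α j) := by
  obtain ⟨l, hl, hlt⟩ := Finsupp.Lex.lt_iff.mp h
  refine Finsupp.Lex.lt_iff.mpr ⟨l.castSucc, fun l' hl' => ?_, by simpa [toLexFinsupp] using hlt⟩
  obtain ⟨l', rfl⟩ := Fin.exists_castSucc_eq.mpr (hl'.trans (Fin.castSucc_lt_last l)).ne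
  simpa [toLexFinsupp] using hl l' (Fin.castSucc_lt_castSucc_iff.mp hl')

lemma toLex_snocExp_le_of_le (α : Fin n → ℕ) {i j : ℕ} (h : i ≤ j) :
    toLex (snocExp α i) ≤ toLex (snocExp α j) :=
  Finsupp.toLex_monotone (snocExp_le_snocExp_iff.mpr ⟨le_rfl, h⟩)

end Exponents

section Slices

open MvPolynomial

variable {n : ℕ} {R : Type*} [CommSemiring R]

/-- The coefficient of `X^β` in `f` viewed in `R[X_n][X₁, …, X_{n-1}]`. -/
noncomputable def sliceLast (β : Fin n → ℕ) (f : MvPolynomial (Fin (n + 1)) R) : Polynomial R :=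
  ∑ m ∈ f.support.filter (fun (m : Fin (n + 1) →₀ ℕ) => Fin.init ⇑m = β),
    Polynomial.C (coeff m f) * Polynomial.X ^ (m (Fin.last n))

lemma LCn_eq_sliceLast (f : MvPolynomial (Fin (n + 1)) R) : LCn f = sliceLast (initLead f) f :=
  rfl

lemma coeff_sliceLast (β : Fin n → ℕ) (f : MvPolynomial (Fin (n + 1)) R) (j : ℕ) :
    (sliceLast β f).coeff j = coeff (snocExp β j) f := by
  classical
  simp only [sliceLast, Polynomial.finsetSum_coeff, Polynomial.coeff_C_mul_X_pow]
  rw [Finset.sum_eq_single (snocExp β j)]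
  · simp
  · intro m hmf hm
    rw [if_neg]
    rintro rfl
    exact hm (snocExp_eq_iff.mpr ⟨(Finset.mem_filter.mp hmf).2, rfl⟩).symm
  · intro hm
    simp only [Finset.mem_filter, mem_support_iff, coe_snocExp, Fin.init_snoc, and_true,
      not_not] at hm
    simp [hm]

lemma sliceLast_ext {f g : MvPolynomial (Fin (n + 1)) R}
    (h : ∀ β, sliceLast β f = sliceLast β g) : f = g := by
  ext m
  simpa [coeff_sliceLast] using congr_arg (·.coeff (m (Fin.last n))) (h (Fin.init ⇑m))

lemma sliceLast_ne_zero_iff {β : Fin n → ℕ} {f : MvPolynomial (Fin (n + 1)) R} :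
    sliceLast β f ≠ 0 ↔ ∃ m ∈ f.support, Fin.init ⇑m = β := by
  constructor
  · intro h
    obtain ⟨j, hj⟩ := Polynomial.support_nonempty.mpr h
    rw [Polynomial.mem_support_iff, coeff_sliceLast] at hj
    exact ⟨_, mem_support_iff.mpr hj, Fin.init_snoc _ _⟩
  · rintro ⟨m, hm, rfl⟩ h
    have := congr_arg (·.coeff (m (Fin.last n))) h
    simp only [coeff_sliceLast, snocExp_init_last, Polynomial.coeff_zero] at this
    exact mem_support_iff.mp hm this

lemma sliceLast_add (β : Fin n → ℕ) (f g : MvPolynomial (Fin (n + 1)) R) :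
    sliceLast β (f + g) = sliceLast β f + sliceLast β g := by
  ext j
  simp [coeff_sliceLast]

lemma sliceLast_one (β : Fin n → ℕ) :
    sliceLast β (1 : MvPolynomial (Fin (n + 1)) R) = if β = 0 then 1 else 0 := by
  classical
  ext j
  rw [coeff_sliceLast, coeff_one]
  simp only [eq_comm (a := (0 : Fin (n + 1) →₀ ℕ)), snocExp_eq_zero_iff]
  split_ifs <;> simp_all [Polynomial.coeff_one]

open Classical in
lemma sliceLast_monomial_mul (β α : Fin n → ℕ) (i : ℕ) (a : R) (q : MvPolynomial (Fin (n + 1)) R) :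
    sliceLast β (monomial (snocExp α i) a * q) =
      if α ≤ β then Polynomial.C a * Polynomial.X ^ i * sliceLast (β - α) q else 0 := by
  ext j
  rw [coeff_sliceLast, coeff_monomial_mul']
  simp only [snocExp_le_snocExp_iff, snocExp_tsub_snocExp]
  split_ifs with h1 h2 h2
  · rw [mul_assoc, Polynomial.coeff_C_mul, Polynomial.coeff_X_pow_mul', if_pos h1.2,
      coeff_sliceLast]
  · exact absurd h1.1 h2
  · rw [mul_assoc, Polynomial.coeff_C_mul, Polynomial.coeff_X_pow_mul', if_neg (by tauto),
      mul_zero]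
  · simp

lemma sliceLast_toMvPolynomial_mul (β : Fin n → ℕ) (c : Polynomial R)
    (q : MvPolynomial (Fin (n + 1)) R) :
    sliceLast β (c.toMvPolynomial (Fin.last n) * q) = c * sliceLast β q := by
  induction c using Polynomial.induction_on' with
  | add c c' hc hc' => rw [map_add, add_mul, sliceLast_add, hc, hc', add_mul]
  | monomial e a =>
    have : (Polynomial.monomial e a).toMvPolynomial (Fin.last n) =
        monomial (snocExp (0 : Fin n → ℕ) e) a := by
      simp [Polynomial.toMvPolynomial, X_pow_eq_monomial, C_mul_monomial, single_last_eq_snocExp]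
    rw [this, sliceLast_monomial_mul, if_pos zero_le, tsub_zero,
      Polynomial.C_mul_X_pow_eq_monomial]

lemma sliceLast_monomial_mul_toMvPolynomial (β α : Fin n → ℕ) (c : Polynomial R) :
    sliceLast β (monomial (snocExp α 0) 1 * c.toMvPolynomial (Fin.last n)) =
      if β = α then c else 0 := by
  rw [sliceLast_monomial_mul, ← mul_one (c.toMvPolynomial _), sliceLast_toMvPolynomial_mul,
    sliceLast_one]
  by_cases h : β = α
  · simp [h]
  · have : ¬ (α ≤ β ∧ β - α = 0) := fun h' => h (le_antisymm (tsub_eq_zero_iff_le.mp h'.2) h'.1)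
    split_ifs <;> simp_all

lemma toLexFinsupp_initLead_of_max_eq {f : MvPolynomial (Fin (n + 1)) R} {y : Lex (Fin n →₀ ℕ)}
    (hy : (f.support.image fun m : Fin (n + 1) →₀ ℕ => toLexFinsupp (Fin.init ⇑m)).max = ↑y) :
    toLexFinsupp (initLead f) = y := by
  simp only [initLead, toLexFinsupp] at hy ⊢
  simp [hy]

lemma toLexFinsupp_le_initLead {β : Fin n → ℕ} {f : MvPolynomial (Fin (n + 1)) R}
    (h : sliceLast β f ≠ 0) : toLexFinsupp β ≤ toLexFinsupp (initLead f) := by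
  obtain ⟨m, hm, rfl⟩ := sliceLast_ne_zero_iff.mp h
  have hmem := Finset.mem_image_of_mem (fun m : Fin (n + 1) →₀ ℕ => toLexFinsupp (Fin.init ⇑m)) hm
  obtain ⟨y, hy⟩ := Finset.max_of_mem hmem
  rw [toLexFinsupp_initLead_of_max_eq hy, ← WithBot.coe_le_coe, ← hy]
  exact Finset.le_max hmem

lemma LCn_ne_zero {f : MvPolynomial (Fin (n + 1)) R} (hf : f ≠ 0) : LCn f ≠ 0 := by
  obtain ⟨y, hy⟩ := Finset.max_of_nonempty ((support_nonempty.mpr hf).image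
    fun m : Fin (n + 1) →₀ ℕ => toLexFinsupp (Fin.init ⇑m))
  obtain ⟨m, hm, hmy⟩ := Finset.mem_image.mp (Finset.mem_of_max hy)
  rw [LCn_eq_sliceLast, sliceLast_ne_zero_iff]
  exact ⟨m, hm, toLexFinsupp_injective (hmy.trans (toLexFinsupp_initLead_of_max_eq hy).symm)⟩

lemma lexDeg_eq_of_forall_toLex_le {f : MvPolynomial (Fin (n + 1)) R} {M : Fin (n + 1) →₀ ℕ}
    (hM : M ∈ f.support) (hle : ∀ m ∈ f.support, toLex m ≤ toLex M) : lexDeg f = ⇑M := by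
  have hmax : (f.support.image toLex).max = ((toLex M : Lex (Fin (n + 1) →₀ ℕ)) : WithBot _) :=
    le_antisymm (Finset.max_le fun _ hb => by
        obtain ⟨m, hm, rfl⟩ := Finset.mem_image.mp hb
        exact WithBot.coe_le_coe.mpr (hle m hm))
      (Finset.le_max (Finset.mem_image_of_mem _ hM))
  rw [lexDeg, hmax, WithBot.unbotD_coe]
  rfl

lemma lexDeg_eq_snoc_natDegree_sliceLast {α : Fin n → ℕ} {f : MvPolynomial (Fin (n + 1)) R}
    (hα : sliceLast α f ≠ 0)
    (hlt : ∀ β ≠ α, sliceLast β f ≠ 0 → toLexFinsupp β < toLexFinsupp α) :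
    lexDeg f = Fin.snoc α (sliceLast α f).natDegree := by
  refine lexDeg_eq_of_forall_toLex_le (M := snocExp α _) ?_ fun m hm => ?_
  · rw [mem_support_iff, ← coeff_sliceLast]
    exact Polynomial.leadingCoeff_ne_zero.mpr hα
  rw [← snocExp_init_last m]
  by_cases hβ : Fin.init ⇑m = α
  · rw [hβ]
    refine toLex_snocExp_le_of_le α (Polynomial.le_natDegree_of_ne_zero ?_)
    rwa [← hβ, coeff_sliceLast, snocExp_init_last, ← mem_support_iff]
  · exact (toLex_snocExp_lt_of_lt
      (hlt _ hβ (sliceLast_ne_zero_iff.mpr ⟨m, hm, rfl⟩)) _ _).le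

lemma toLexFinsupp_lt_initLead {β : Fin n → ℕ} {f : MvPolynomial (Fin (n + 1)) R}
    (hβ : β ≠ initLead f) (h : sliceLast β f ≠ 0) : toLexFinsupp β < toLexFinsupp (initLead f) :=
  (toLexFinsupp_le_initLead h).lt_of_ne (toLexFinsupp_injective.ne hβ)

lemma lexDeg_eq_snoc_initLead {f : MvPolynomial (Fin (n + 1)) R} (hf : f ≠ 0) :
    lexDeg f = Fin.snoc (initLead f) (LCn f).natDegree :=
  lexDeg_eq_snoc_natDegree_sliceLast (LCn_ne_zero hf) fun _ => toLexFinsupp_lt_initLead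

lemma eq_toMvPolynomial_LCn {f : MvPolynomial (Fin (n + 1)) R}
    (hf : ∀ m ∈ f.support, Fin.init ⇑m = 0) : f = (LCn f).toMvPolynomial (Fin.last n) := by
  have hzero : ∀ β ≠ 0, sliceLast β f = 0 := fun β hβ => by
    by_contra h
    obtain ⟨m, hm, rfl⟩ := sliceLast_ne_zero_iff.mp h
    exact hβ (hf m hm)
  by_cases hf0 : f = 0
  · simp [hf0, LCn]
  have hinit : initLead f = 0 := by
    by_contra h
    exact LCn_ne_zero hf0 (hzero _ h)
  refine sliceLast_ext fun β => ?_
  rw [← mul_one ((LCn f).toMvPolynomial _), sliceLast_toMvPolynomial_mul, sliceLast_one,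
    LCn_eq_sliceLast, hinit]
  split_ifs with hβ
  · rw [hβ, mul_one]
  · rw [mul_zero, hzero β hβ]

end Slices

namespace IsRedGB

open MvPolynomial

variable {n : ℕ} {k : Type*} [Field k]

lemma lexDeg_le_of_le {I : Ideal (MvPolynomial (Fin n) k)} {G : Set (MvPolynomial (Fin n) k)}
    (hG : IsRedGB I G) {g f : MvPolynomial (Fin n) k} (hg : g ∈ G)
    (hf : f ∈ I) (hf0 : f ≠ 0) (hfg : lexDeg f ≤ lexDeg g) : lexDeg g ≤ lexDeg f := by
  obtain ⟨-, -, hmonic, hdiv, hreduced⟩ := hG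
  obtain ⟨g', hg', hle⟩ := hdiv f hf hf0
  by_cases hg'g : g' = g
  · exact hg'g ▸ hle
  · have hmem : Finsupp.equivFunOnFinite.symm (lexDeg g) ∈ g.support := by
      rw [mem_support_iff, hmonic g hg]
      exact one_ne_zero
    exact (hreduced g hg _ hmem g' hg' hg'g (by simpa using hle.trans hfg)).elim

theorem LCn_dvd {I : Ideal (MvPolynomial (Fin (n + 1)) k)}
    {G : Set (MvPolynomial (Fin (n + 1)) k)} (hG : IsRedGB I G)
    {g : MvPolynomial (Fin (n + 1)) k} (hg : g ∈ G) {P : Polynomial k}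
    (hP : P.toMvPolynomial (Fin.last n) ∈ I) : LCn g ∣ P := by
  classical
  set α := initLead g
  set h := LCn g
  have hg0 : g ≠ 0 := hG.2.1 g hg
  have hh0 : h ≠ 0 := LCn_ne_zero hg0
  set d := EuclideanDomain.gcd h P
  obtain ⟨a, b, hd⟩ : ∃ a b, d = h * a + P * b := ⟨_, _, EuclideanDomain.gcd_eq_gcd_ab h P⟩
  have hdh : d ∣ h := EuclideanDomain.gcd_dvd_left h P
  have hd0 : d ≠ 0 := fun h0 => hh0 (EuclideanDomain.gcd_eq_zero_iff.mp h0).1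
  set f := a.toMvPolynomial (Fin.last n) * g +
    monomial (snocExp α 0) 1 * (b * P).toMvPolynomial (Fin.last n)
  have hfI : f ∈ I := by
    refine I.add_mem (I.mul_mem_left _ (hG.1 hg)) ?_
    rw [map_mul, ← mul_assoc]
    exact I.mul_mem_left _ hP
  have hslice : ∀ β, sliceLast β f = a * sliceLast β g + if β = α then b * P else 0 := fun β => by
    rw [sliceLast_add, sliceLast_toMvPolynomial_mul, sliceLast_monomial_mul_toMvPolynomial]
  have hfα : sliceLast α f = d := by
    rw [hslice, if_pos rfl, hd, ← LCn_eq_sliceLast]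
    ring
  have hlexf : lexDeg f = Fin.snoc α d.natDegree := by
    rw [← hfα]
    refine lexDeg_eq_snoc_natDegree_sliceLast (hfα ▸ hd0) fun β hβ hβf => ?_
    rw [hslice, if_neg hβ, add_zero] at hβf
    exact toLexFinsupp_lt_initLead hβ (right_ne_zero_of_mul hβf)
  have hf0 : f ≠ 0 := fun h0 => hd0 (by simp [← hfα, h0, sliceLast])
  have hle := hG.lexDeg_le_of_le hg hfI hf0 (by
    rw [hlexf, lexDeg_eq_snoc_initLead hg0]
    exact snoc_le_snoc_iff.mpr ⟨le_rfl, Polynomial.natDegree_le_of_dvd hdh hh0⟩)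
  rw [hlexf, lexDeg_eq_snoc_initLead hg0] at hle
  have hhd : h ∣ d := (Polynomial.associated_of_dvd_of_natDegree_le hdh hh0
    (by simpa using hle (Fin.last n))).symm.dvd
  exact hhd.trans (EuclideanDomain.gcd_dvd_right h P)

end IsRedGB

theorem LCn_dvd_p0_general {n : ℕ} {k : Type*} [Field k]
    (I : Ideal (MvPolynomial (Fin (n + 1)) k))
    (G : Set (MvPolynomial (Fin (n + 1)) k)) (hG : IsRedGB I G)
    (p₀ : MvPolynomial (Fin (n + 1)) k) (hp₀G : p₀ ∈ G)
    (hp₀uni : ∀ m ∈ p₀.support, Fin.init ⇑m = (0 : Fin n → ℕ)) :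
    ∀ g ∈ G, LCn g ∣ LCn p₀ := fun _ hg =>
  hG.LCn_dvd hg (eq_toMvPolynomial_LCn hp₀uni ▸ hG.1 hp₀G)

/-- For the lex reduced Gröbner basis `G` of the vanishing ideal of a finite set of
points with multiplicity structures, with `p₀ ∈ G` the univariate polynomial in
`X_n`, the leading coefficient `LC_n(g)` divides `p₀` for every `g ∈ G`. -/
theorem LCn_dvd_p0 {n : ℕ} {k : Type*} [Field k] [CharZero k]
    {t : ℕ} (p : Fin t → (Fin (n + 1) → k)) (hp : Function.Injective p)
    (D : Fin t → Set (Fin (n + 1) → ℕ))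
    (hfin : ∀ i, (D i).Finite) (hlow : ∀ i, IsLowerSetN (D i)) (hne : ∀ i, (D i).Nonempty)
    (I : Ideal (MvPolynomial (Fin (n + 1)) k))
    (hI : (I : Set (MvPolynomial (Fin (n + 1)) k)) =
      {f | ∀ i : Fin t, ∀ d ∈ D i, MvPolynomial.eval (p i) (mderiv d f) = 0})
    (G : Set (MvPolynomial (Fin (n + 1)) k)) (hG : IsRedGB I G)
    (p₀ : MvPolynomial (Fin (n + 1)) k) (hp₀G : p₀ ∈ G)
    (hp₀uni : ∀ m ∈ p₀.support, Fin.init ⇑m = (0 : Fin n → ℕ)) :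
    ∀ g ∈ G, LCn g ∣ LCn p₀ :=
  LCn_dvd_p0_general I G hG p₀ hp₀G hp₀uni
end

section
/- Let H be a finite set of points in kⁿ, all with the same last coordinate c, with multiplicity structures. If f̃ ∈ k[X₁,…,X_{n-1}] vanishes on the (n-1)-dimensional set of points and structures obtained from the functionals of H whose last derivative order is exactly i (i.e., projecting away the last coordinate), and w is the maximal last derivative order occurring in H, then (X_n - c)^i · f̃ annihilates every functional of H whose last derivative order differs from i, and annihilates those of order i as well, hence (X_n - c)^i · f̃ ∈ I(H); moreover (X_n - c)^{w+1} ∈ I(H). -/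
open MvPolynomial

section Aux

variable {n : ℕ} {k : Type*} [CommRing k]

lemma pd_last_rename (f : MvPolynomial (Fin n) k) :
    pderiv (Fin.last n) (rename Fin.castSucc f) = 0 := by
  apply pderiv_eq_zero_of_notMem_vars
  intro h
  obtain ⟨j, -, hj⟩ := mem_vars_rename _ _ h
  exact (Fin.castSucc_lt_last j).ne hj

lemma pd_cast_sub (c : k) (j : Fin n) :
    pderiv (Fin.castSucc j) (X (Fin.last n) - C c : MvPolynomial (Fin (n+1)) k) = 0 := by
  simp [pderiv_X_of_ne (Fin.castSucc_lt_last j).ne']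

lemma iter_pd_smul (i : Fin n) (m : ℕ) (s : k) (x : MvPolynomial (Fin n) k) :
    (fun h => pderiv i h)^[m] (s • x) = s • (fun h => pderiv i h)^[m] x := by
  induction m generalizing x with
  | zero => rfl
  | succ m ih =>
      rw [Function.iterate_succ_apply, Function.iterate_succ_apply]
      rw [show pderiv i (s • x) = s • pderiv i x from (pderiv i).map_smul s x, ih]

lemma iter_pd_last (c : k) (a m : ℕ) (f : MvPolynomial (Fin n) k) :
    (fun h => pderiv (Fin.last n) h)^[m]
      ((X (Fin.last n) - C c) ^ a * rename Fin.castSucc f)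
    = (a.descFactorial m : k) •
      ((X (Fin.last n) - C c) ^ (a - m) * rename Fin.castSucc f) := by
  induction m generalizing a with
  | zero => simp
  | succ m ih =>
      rw [Function.iterate_succ_apply]
      have hstep : pderiv (Fin.last n)
          ((X (Fin.last n) - C c) ^ a * rename Fin.castSucc f)
          = (a : k) • ((X (Fin.last n) - C c) ^ (a - 1) * rename Fin.castSucc f) := by
        rw [pderiv_mul, pderiv_pow, pd_last_rename]
        have : pderiv (Fin.last n) (X (Fin.last n) - C c : MvPolynomial (Fin (n+1)) k) = 1 := by
          simp
        rw [this]
        rw [smul_eq_C_mul, ← map_natCast (C : k →+* MvPolynomial (Fin (n+1)) k)]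
        push_cast
        ring
      rw [hstep, iter_pd_smul, ih, smul_smul]
      congr 1
      · push_cast [← Nat.cast_mul]
        congr 1
        cases a with
        | zero => simp
        | succ b => rw [Nat.succ_descFactorial_succ]; simp
      · congr 2
        omega

lemma iter_pd_cast (c : k) (j : Fin n) (e a : ℕ) (f : MvPolynomial (Fin n) k) :
    (fun h => pderiv (Fin.castSucc j) h)^[e]
      ((X (Fin.last n) - C c) ^ a * rename Fin.castSucc f)
    = (X (Fin.last n) - C c) ^ a *
        rename Fin.castSucc ((fun h => pderiv j h)^[e] f) := by
  induction e generalizing f with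
  | zero => rfl
  | succ e ih =>
      rw [Function.iterate_succ_apply, Function.iterate_succ_apply]
      have : pderiv (Fin.castSucc j)
          ((X (Fin.last n) - C c) ^ a * rename Fin.castSucc f)
          = (X (Fin.last n) - C c) ^ a * rename Fin.castSucc (pderiv j f) := by
        rw [pderiv_mul, pderiv_pow, pd_cast_sub,
          pderiv_rename (Fin.castSucc_injective n)]
        ring
      rw [this, ih]

lemma foldr_cast (c : k) (l : List (Fin n)) (e : Fin (n+1) → ℕ) (a : ℕ)
    (f : MvPolynomial (Fin n) k) :
    (l.map Fin.castSucc).foldr (fun i g => (fun h => pderiv i h)^[e i] g)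
      ((X (Fin.last n) - C c) ^ a * rename Fin.castSucc f)
    = (X (Fin.last n) - C c) ^ a *
        rename Fin.castSucc
          (l.foldr (fun j g => (fun h => pderiv j h)^[e (Fin.castSucc j)] g) f) := by
  induction l with
  | nil => rfl
  | cons x xs ih => simp only [List.map_cons, List.foldr_cons, ih, iter_pd_cast]

lemma foldr_smul (l : List (Fin n)) (e : Fin n → ℕ) (s : k) (x : MvPolynomial (Fin n) k) :
    l.foldr (fun i g => (fun h => pderiv i h)^[e i] g) (s • x)
    = s • l.foldr (fun i g => (fun h => pderiv i h)^[e i] g) x := by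
  induction l generalizing x with
  | nil => rfl
  | cons y ys ih => simp only [List.foldr_cons, ih, iter_pd_smul]

lemma key_mderiv (c : k) (a : ℕ) (f : MvPolynomial (Fin n) k) (d : Fin (n+1) → ℕ) :
    mderiv d ((X (Fin.last n) - C c) ^ a * rename Fin.castSucc f)
    = (a.descFactorial (d (Fin.last n)) : k) •
      ((X (Fin.last n) - C c) ^ (a - d (Fin.last n)) *
        rename Fin.castSucc (mderiv (Fin.init d) f)) := by
  unfold mderiv
  rw [List.finRange_succ_last, List.foldr_append, List.foldr_cons, List.foldr_nil,
    iter_pd_last, foldr_smul, foldr_cast]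
  rfl

end Aux

/-- Special-case vanishing: if all points of `H` have last coordinate `c`, `f̃` in
`n-1` variables annihilates the projected functionals of `H` of last derivative
order exactly `i`, and `w` bounds all last derivative orders, then
`(X_n - c)^i · f̃ ∈ I(H)` and `(X_n - c)^{w+1} ∈ I(H)`. -/
theorem special_case_vanishing {n : ℕ} {k : Type*} [Field k] [CharZero k]
    {t : ℕ} (p : Fin t → (Fin (n + 1) → k)) (hp : Function.Injective p)
    (c : k) (hc : ∀ j, p j (Fin.last n) = c)
    (D : Fin t → Set (Fin (n + 1) → ℕ))
    (hfin : ∀ j, (D j).Finite) (hlow : ∀ j, IsLowerSetN (D j)) (hne : ∀ j, (D j).Nonempty)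
    (w : ℕ) (hw : ∀ j, ∀ d ∈ D j, d (Fin.last n) ≤ w)
    (i : ℕ) (ftilde : MvPolynomial (Fin n) k)
    (hvan : ∀ j, ∀ d ∈ D j, d (Fin.last n) = i →
      eval (Fin.init (p j)) (mderiv (Fin.init d) ftilde) = 0) :
    (∀ j, ∀ d ∈ D j,
      eval (p j) (mderiv d ((X (Fin.last n) - C c) ^ i * rename Fin.castSucc ftilde)) = 0) ∧
    (∀ j, ∀ d ∈ D j,
      eval (p j) (mderiv d ((X (Fin.last n) - C c) ^ (w + 1))) = 0) := by
  constructor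
  · intro j d hd
    rw [key_mderiv]
    rcases lt_trichotomy (d (Fin.last n)) i with hlt | heq | hgt
    · simp only [smul_eq_C_mul, map_mul, map_pow, map_sub, eval_X, eval_C, hc, sub_self]
      rw [zero_pow (by omega : i - d (Fin.last n) ≠ 0)]
      ring
    · have hv := hvan j d hd heq
      rw [show Fin.init (p j) = p j ∘ Fin.castSucc from rfl] at hv
      simp only [heq, Nat.sub_self, pow_zero, one_mul, smul_eq_C_mul, map_mul, eval_rename, hv,
        mul_zero]
    · rw [(Nat.descFactorial_eq_zero_iff_lt).2 hgt]
      simp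
  · intro j d hd
    have h1 : ((X (Fin.last n) - C c) ^ (w + 1) : MvPolynomial (Fin (n + 1)) k)
        = (X (Fin.last n) - C c) ^ (w + 1) * rename Fin.castSucc (1 : MvPolynomial (Fin n) k) := by
      simp
    rw [h1, key_mderiv]
    have hm := hw j d hd
    simp only [smul_eq_C_mul, map_mul, map_pow, map_sub, eval_X, eval_C, hc, sub_self]
    rw [zero_pow (by omega : w + 1 - d (Fin.last n) ≠ 0)]
    ring
end

section
/- Let H₁ and H₂ be finite sets of points with multiplicity structures in kⁿ such that no point of H₁ shares its last coordinate with any point of H₂. Then I(H₁ ∪ H₂) = I(H₁) ∩ I(H₂), and with p₁ = ∏_{fibres c of H₁}(X_n - c)^{w_c+1} ∈ I(H₁) ∩ k[X_n] and p₂ the analogous polynomial for H₂, we have gcd(p₁, p₂) = 1 and f₁·p₂ + f₂·p₁ ∈ I(H₁ ∪ H₂) for any f₁ ∈ I(H₁), f₂ ∈ I(H₂). -/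
open MvPolynomial

/-- The set of polynomials annihilated by all derivative functionals of the
configuration of points `p` with multiplicity structures `D`. -/
def vset {n : ℕ} {k : Type*} [Field k] {ι : Type*} [Fintype ι]
    (p : ι → (Fin (n + 1) → k)) (D : ι → Finset (Fin (n + 1) → ℕ)) :
    Set (MvPolynomial (Fin (n + 1)) k) :=
  {f | ∀ j : ι, ∀ d ∈ D j, eval (p j) (mderiv d f) = 0}

/-- `∏_{fibres c}(X_n - c)^{w_c+1}`, product over the distinct last coordinates `c`
of the points, `w_c` the maximal last component of multi-indices in that fibre. -/
noncomputable def fibPoly {n : ℕ} {k : Type*} [Field k] [DecidableEq k]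
    {ι : Type*} [Fintype ι] [DecidableEq ι]
    (p : ι → (Fin (n + 1) → k)) (D : ι → Finset (Fin (n + 1) → ℕ)) :
    MvPolynomial (Fin (n + 1)) k :=
  ∏ c ∈ Finset.univ.image (fun j => p j (Fin.last n)),
    (X (Fin.last n) - C c) ^
      ((Finset.univ.filter (fun j => p j (Fin.last n) = c)).sup
        (fun j => (D j).sup (fun d => d (Fin.last n))) + 1)


/-!
If every multiplicity structure is a lower set, the vanishing set `I(H)` is an ideal: peeling
one partial derivative off `∂^d (f g)` with the product rule shows, by induction on `d`, that
`∂^d (f g)` vanishes at a point once all `∂^e f` with `e ≤ d` do. The fibre polynomial `p_H` is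
divisible by `(X_n - c)^(w_c + 1)` for every fibre `c`; a derivative of order `d_n ≤ w_c` in
`X_n` leaves a factor `X_n - c`, which vanishes on the fibre, so `p_H ∈ I(H)`. Disjoint last
coordinates make all linear factors of `p₁` and `p₂` coprime, and then `f₁ p₂` and `f₂ p₁` lie
in `I(H₁) ∩ I(H₂) = I(H₁ ∪ H₂)`.
-/

open Function

section PartialDerivatives

variable {σ R : Type*} [CommRing R]

theorem MvPolynomial.pderiv_pderiv_comm (i j : σ) (f : MvPolynomial σ R) :
    pderiv i (pderiv j f) = pderiv j (pderiv i f) := by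
  classical
  have h : ⁅pderiv i, pderiv j⁆ = (0 : Derivation R (MvPolynomial σ R) (MvPolynomial σ R)) :=
    derivation_ext fun l => by
      rw [Derivation.commutator_apply, pderiv_X, pderiv_X]
      simp [Pi.single_apply, apply_ite]
  simpa [Derivation.commutator_apply, sub_eq_zero] using congr($h f)

theorem MvPolynomial.commute_pderiv (i j : σ) :
    Commute (pderiv (R := R) i).toLinearMap (pderiv j).toLinearMap :=
  LinearMap.ext (pderiv_pderiv_comm i j)

end PartialDerivatives

section MultiDerivative

variable {N : ℕ} {R : Type*} [CommRing R]

theorem mderiv_eq_list_prod (d : Fin N → ℕ) (f : MvPolynomial (Fin N) R) :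
    mderiv d f = ((List.finRange N).map fun i =>
      (pderiv (R := R) i).toLinearMap ^ d i).prod f := by
  unfold mderiv
  induction List.finRange N with
  | nil => rfl
  | cons i l ih => simp [ih, Module.End.pow_apply]

theorem mderiv_add (d : Fin N → ℕ) (f g : MvPolynomial (Fin N) R) :
    mderiv d (f + g) = mderiv d f + mderiv d g := by
  simp only [mderiv_eq_list_prod, map_add]

@[simp]
theorem mderiv_zero (f : MvPolynomial (Fin N) R) : mderiv 0 f = f := by
  simp [mderiv_eq_list_prod]

theorem list_prod_pderiv_pow_update {l : List (Fin N)} (hl : l.Nodup) {i : Fin N} (hi : i ∈ l)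
    {d : Fin N → ℕ} (hd : d i ≠ 0) :
    (l.map fun j => (pderiv (R := R) j).toLinearMap ^ d j).prod =
      (l.map fun j => (pderiv (R := R) j).toLinearMap ^
        update d i (d i - 1) j).prod * (pderiv i).toLinearMap := by
  induction l with
  | nil => simp at hi
  | cons a l ih =>
    obtain ⟨hal, hl⟩ := List.nodup_cons.1 hl
    rcases eq_or_ne a i with rfl | hai
    · have hrest : ∀ j ∈ l, update d a (d a - 1) j = d j := fun j hj =>
        update_of_ne (ne_of_mem_of_not_mem hj hal) _ _
      have hcomm : Commute (pderiv (R := R) a).toLinearMap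
          (l.map fun j => (pderiv (R := R) j).toLinearMap ^ d j).prod :=
        Commute.list_prod_right _ _ fun _ hb => by
          obtain ⟨j, -, rfl⟩ := List.mem_map.1 hb
          exact (commute_pderiv a j).pow_right _
      obtain ⟨m, hm⟩ := Nat.exists_eq_succ_of_ne_zero hd
      rw [List.map_cons, List.map_cons, List.prod_cons, List.prod_cons, update_self,
        List.map_congr_left fun j hj => congrArg _ (hrest j hj), hm, Nat.succ_sub_one, pow_succ,
        mul_assoc, mul_assoc, hcomm.eq]
    · rw [List.map_cons, List.map_cons, List.prod_cons, List.prod_cons, update_of_ne hai,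
        ih hl (List.mem_of_ne_of_mem (Ne.symm hai) hi), mul_assoc]

theorem mderiv_eq_mderiv_update_pderiv {d : Fin N → ℕ} {i : Fin N} (hd : d i ≠ 0)
    (f : MvPolynomial (Fin N) R) :
    mderiv d f = mderiv (update d i (d i - 1)) (pderiv i f) := by
  rw [mderiv_eq_list_prod, mderiv_eq_list_prod,
    list_prod_pderiv_pow_update (List.nodup_finRange N) (List.mem_finRange i) hd]
  rfl

theorem mderiv_pderiv (d : Fin N → ℕ) (i : Fin N) (f : MvPolynomial (Fin N) R) :
    mderiv d (pderiv i f) = mderiv (update d i (d i + 1)) f := by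
  rw [mderiv_eq_mderiv_update_pderiv (d := update d i (d i + 1)) (i := i) (by simp)]
  simp

theorem update_pred_lt {d : Fin N → ℕ} {i : Fin N} (hi : d i ≠ 0) :
    update d i (d i - 1) < d :=
  update_lt_self_iff.2 (Nat.sub_one_lt hi)

@[elab_as_elim]
theorem induction_update_pred {motive : (Fin N → ℕ) → Prop} (zero : motive 0)
    (step : ∀ d i, d i ≠ 0 → motive (update d i (d i - 1)) → motive d) (d : Fin N → ℕ) :
    motive d := by
  induction d using WellFoundedLT.induction with
  | _ d ih =>
    by_cases hd : d = 0
    · exact hd ▸ zero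
    obtain ⟨i, hi⟩ : ∃ i, d i ≠ 0 := Function.ne_iff.1 hd
    exact step d i hi (ih _ (update_pred_lt hi))

theorem IsLowerSetN.isLowerSet {D : Set (Fin N → ℕ)} (hD : IsLowerSetN D) : IsLowerSet D := by
  intro a
  induction a using WellFoundedLT.induction with
  | _ a ih =>
    intro b hba ha
    rcases hba.eq_or_lt with rfl | hlt
    · exact ha
    obtain ⟨i, hi⟩ := (Pi.lt_def.1 hlt).2
    have hai : a i ≠ 0 := by omega
    refine ih _ (update_pred_lt hai) ?_ (hD a ha i hai)
    exact le_update_iff.2 ⟨by omega, fun j _ => hba j⟩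

theorem eval_mderiv_mul_eq_zero (a : Fin N → R) (d : Fin N → ℕ) {f : MvPolynomial (Fin N) R}
    (hf : ∀ e ≤ d, eval a (mderiv e f) = 0) (g : MvPolynomial (Fin N) R) :
    eval a (mderiv d (f * g)) = 0 := by
  induction d using induction_update_pred generalizing f g with
  | zero => rw [mderiv_zero, map_mul, ← mderiv_zero f, hf 0 le_rfl, zero_mul]
  | step d i hi ih =>
    have hlt := update_pred_lt hi
    have hf' : ∀ e ≤ update d i (d i - 1), eval a (mderiv e (pderiv i f)) = 0 := fun e he => by
      rw [mderiv_pderiv]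
      obtain ⟨hei, hej⟩ := le_update_iff.1 he
      exact hf _ (update_le_iff.2 ⟨by omega, hej⟩)
    rw [mderiv_eq_mderiv_update_pderiv hi, pderiv_mul, mderiv_add, map_add, ih hf' g,
      ih (fun e he => hf e (he.trans hlt.le)) _, add_zero]

end MultiDerivative

section Divisibility

variable {σ R : Type*} [CommSemiring R] {q f : MvPolynomial σ R} {m : ℕ}

theorem pow_sub_one_dvd_pderiv (i : σ) (h : q ^ m ∣ f) : q ^ (m - 1) ∣ pderiv i f := by
  obtain ⟨g, rfl⟩ := h
  rw [pderiv_mul, pderiv_pow]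
  exact dvd_add (dvd_mul_of_dvd_left (dvd_mul_of_dvd_left (dvd_mul_left _ _) _) _)
    (dvd_mul_of_dvd_left (pow_dvd_pow q (m.sub_le 1)) _)

theorem pow_dvd_pderiv_of_pderiv_eq_zero {i : σ} (hq : pderiv i q = 0) (h : q ^ m ∣ f) :
    q ^ m ∣ pderiv i f := by
  obtain ⟨g, rfl⟩ := h
  rw [pderiv_mul, pderiv_pow, hq, mul_zero, zero_mul, zero_add]
  exact dvd_mul_right _ _

end Divisibility

section Hyperplane

variable {N : ℕ} {R : Type*} [CommRing R] {f : MvPolynomial (Fin N) R} {m : ℕ}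

theorem X_sub_C_pow_dvd_mderiv {i₀ : Fin N} {c : R} (h : (X i₀ - C c) ^ m ∣ f)
    (d : Fin N → ℕ) : (X i₀ - C c) ^ (m - d i₀) ∣ mderiv d f := by
  induction d using induction_update_pred generalizing m f with
  | zero => simpa using h
  | step d i hi ih =>
    rw [mderiv_eq_mderiv_update_pderiv hi]
    rcases eq_or_ne i i₀ with rfl | hne
    · simpa [show m - 1 - (d i - 1) = m - d i by omega] using ih (pow_sub_one_dvd_pderiv i h)
    · simpa [update_of_ne hne.symm] using
        ih (pow_dvd_pderiv_of_pderiv_eq_zero (by simp [pderiv_X_of_ne hne.symm]) h)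

theorem eval_mderiv_eq_zero_of_X_sub_C_pow_dvd {a : Fin N → R} {i₀ : Fin N}
    (h : (X i₀ - C (a i₀)) ^ m ∣ f) {d : Fin N → ℕ} (hd : d i₀ < m) :
    eval a (mderiv d f) = 0 := by
  obtain ⟨g, hg⟩ := X_sub_C_pow_dvd_mderiv h d
  simp [hg, Nat.sub_ne_zero_of_lt hd]

theorem isCoprime_X_sub_C {σ : Type*} (i : σ) {c c' : R} (h : IsUnit (c - c')) :
    IsCoprime (X i - C c : MvPolynomial σ R) (X i - C c') := by
  have := (Polynomial.isCoprime_X_sub_C_of_isUnit_sub h).map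
    (Polynomial.aeval (R := R) (X i : MvPolynomial σ R)).toRingHom
  simpa only [AlgHom.toRingHom_eq_coe, RingHom.coe_coe, map_sub, Polynomial.aeval_X,
    Polynomial.aeval_C, algebraMap_eq] using this

end Hyperplane

section VanishingSets

variable {n : ℕ} {k : Type*} [Field k] {ι κ : Type*} [Fintype ι] [Fintype κ]
  {p : ι → (Fin (n + 1) → k)} {D : ι → Finset (Fin (n + 1) → ℕ)}
  {f g : MvPolynomial (Fin (n + 1)) k}

theorem add_mem_vset (hf : f ∈ vset p D) (hg : g ∈ vset p D) : f + g ∈ vset p D :=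
  fun j d hd => by rw [mderiv_add, map_add, hf j d hd, hg j d hd, add_zero]

theorem mul_mem_vset (hD : ∀ j, IsLowerSetN (↑(D j) : Set (Fin (n + 1) → ℕ)))
    (hf : f ∈ vset p D) (g : MvPolynomial (Fin (n + 1)) k) : f * g ∈ vset p D :=
  fun j d hd => eval_mderiv_mul_eq_zero (p j) d
    (fun e he => hf j e ((hD j).isLowerSet he (Finset.mem_coe.2 hd))) g

theorem vset_sum_elim (p₁ : ι → (Fin (n + 1) → k)) (p₂ : κ → (Fin (n + 1) → k))
    (D₁ : ι → Finset (Fin (n + 1) → ℕ)) (D₂ : κ → Finset (Fin (n + 1) → ℕ)) :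
    vset (Sum.elim p₁ p₂) (Sum.elim D₁ D₂) = vset p₁ D₁ ∩ vset p₂ D₂ := by
  ext f
  exact ⟨fun h => ⟨fun j => h (.inl j), fun j => h (.inr j)⟩,
    fun ⟨h₁, h₂⟩ => Sum.rec h₁ h₂⟩

variable [DecidableEq k] [DecidableEq ι] [DecidableEq κ]

theorem fibPoly_mem_vset : fibPoly p D ∈ vset p D := by
  intro j d hd
  have hdvd : _ ∣ fibPoly p D := Finset.dvd_prod_of_mem _
    (Finset.mem_image_of_mem (fun j => p j (Fin.last n)) (Finset.mem_univ j))
  refine eval_mderiv_eq_zero_of_X_sub_C_pow_dvd hdvd (Nat.lt_succ_of_le ?_)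
  have hfibre : j ∈ Finset.univ.filter (fun j' => p j' (Fin.last n) = p j (Fin.last n)) :=
    Finset.mem_filter.2 ⟨Finset.mem_univ j, rfl⟩
  exact (Finset.le_sup (f := fun e => e (Fin.last n)) hd).trans
    (Finset.le_sup (f := fun j => (D j).sup fun e => e (Fin.last n)) hfibre)

theorem isCoprime_fibPoly {p' : κ → (Fin (n + 1) → k)} {D' : κ → Finset (Fin (n + 1) → ℕ)}
    (h : ∀ i j, p i (Fin.last n) ≠ p' j (Fin.last n)) :
    IsCoprime (fibPoly p D) (fibPoly p' D') := by
  refine IsCoprime.prod_left fun c hc => IsCoprime.prod_right fun c' hc' => IsCoprime.pow ?_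
  obtain ⟨i, -, rfl⟩ := Finset.mem_image.1 hc
  obtain ⟨j, -, rfl⟩ := Finset.mem_image.1 hc'
  exact isCoprime_X_sub_C _ (sub_ne_zero.2 (h i j)).isUnit

end VanishingSets

theorem union_vanishing_ideal_general {n : ℕ} {k : Type*} [Field k] [DecidableEq k]
    {t₁ t₂ : ℕ} (p₁ : Fin t₁ → (Fin (n + 1) → k)) (p₂ : Fin t₂ → (Fin (n + 1) → k))
    (D₁ : Fin t₁ → Finset (Fin (n + 1) → ℕ)) (D₂ : Fin t₂ → Finset (Fin (n + 1) → ℕ))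
    (hl₁ : ∀ j, IsLowerSetN (↑(D₁ j) : Set (Fin (n + 1) → ℕ)))
    (hl₂ : ∀ j, IsLowerSetN (↑(D₂ j) : Set (Fin (n + 1) → ℕ)))
    (hdisj : ∀ i j, p₁ i (Fin.last n) ≠ p₂ j (Fin.last n)) :
    vset (Sum.elim p₁ p₂) (Sum.elim D₁ D₂) = vset p₁ D₁ ∩ vset p₂ D₂ ∧
    fibPoly p₁ D₁ ∈ vset p₁ D₁ ∧ fibPoly p₂ D₂ ∈ vset p₂ D₂ ∧
    IsCoprime (fibPoly p₁ D₁) (fibPoly p₂ D₂) ∧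
    ∀ f₁ ∈ vset p₁ D₁, ∀ f₂ ∈ vset p₂ D₂,
      f₁ * fibPoly p₂ D₂ + f₂ * fibPoly p₁ D₁ ∈ vset (Sum.elim p₁ p₂) (Sum.elim D₁ D₂) := by
  have hunion := vset_sum_elim p₁ p₂ D₁ D₂
  refine ⟨hunion, fibPoly_mem_vset, fibPoly_mem_vset, isCoprime_fibPoly hdisj,
    fun f₁ h₁ f₂ h₂ => hunion ▸ ⟨?_, ?_⟩⟩
  · rw [mul_comm f₂]
    exact add_mem_vset (mul_mem_vset hl₁ h₁ _) (mul_mem_vset hl₁ fibPoly_mem_vset _)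
  · rw [mul_comm f₁]
    exact add_mem_vset (mul_mem_vset hl₂ fibPoly_mem_vset _) (mul_mem_vset hl₂ h₂ _)

/-- If no point of `H₁` shares its last coordinate with a point of `H₂`, then
`I(H₁ ∪ H₂) = I(H₁) ∩ I(H₂)`; the fibre polynomials `p₁ ∈ I(H₁)`, `p₂ ∈ I(H₂)` are
coprime, and `f₁·p₂ + f₂·p₁ ∈ I(H₁ ∪ H₂)` for any `f₁ ∈ I(H₁)`, `f₂ ∈ I(H₂)`. -/
theorem union_vanishing_ideal {n : ℕ} {k : Type*} [Field k] [CharZero k] [DecidableEq k]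
    {t₁ t₂ : ℕ} (p₁ : Fin t₁ → (Fin (n + 1) → k)) (p₂ : Fin t₂ → (Fin (n + 1) → k))
    (hp₁ : Function.Injective p₁) (hp₂ : Function.Injective p₂)
    (D₁ : Fin t₁ → Finset (Fin (n + 1) → ℕ)) (D₂ : Fin t₂ → Finset (Fin (n + 1) → ℕ))
    (hl₁ : ∀ j, IsLowerSetN (↑(D₁ j) : Set (Fin (n + 1) → ℕ)))
    (hl₂ : ∀ j, IsLowerSetN (↑(D₂ j) : Set (Fin (n + 1) → ℕ)))
    (hne₁ : ∀ j, (D₁ j).Nonempty) (hne₂ : ∀ j, (D₂ j).Nonempty)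
    (hdisj : ∀ i j, p₁ i (Fin.last n) ≠ p₂ j (Fin.last n)) :
    vset (Sum.elim p₁ p₂) (Sum.elim D₁ D₂) = vset p₁ D₁ ∩ vset p₂ D₂ ∧
    fibPoly p₁ D₁ ∈ vset p₁ D₁ ∧ fibPoly p₂ D₂ ∈ vset p₂ D₂ ∧
    IsCoprime (fibPoly p₁ D₁) (fibPoly p₂ D₂) ∧
    ∀ f₁ ∈ vset p₁ D₁, ∀ f₂ ∈ vset p₂ D₂,
      f₁ * fibPoly p₂ D₂ + f₂ * fibPoly p₁ D₁ ∈ vset (Sum.elim p₁ p₂) (Sum.elim D₁ D₂) :=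
  union_vanishing_ideal_general p₁ p₂ D₁ D₂ hl₁ hl₂ hdisj
end
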